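/- Let n ≥ 5 and let π be a set of primes containing 2. If x ∈ S_n is a transposition, then |C_{S_n}(x)_π| / |(S_n)_π| < 1/2, i.e., strictly fewer than half the π-elements of S_n commute with x. -/

import Mathlib

/-!
Write `X = (a b)`, `Y = (c d)` for four distinct points and `t = (a c)(b d)`, which conjugates
`X` to `Y`. Let `S` be the set of `π`-elements and `A`, `B` those commuting with `X`, resp. `Y`;
then `|A| = |B|`, so it suffices that `|A ∩ B| < |S \ (A ∪ B)|`. Right multiplication by `t`
sends `A ∩ B` into `S \ (A ∪ B)`: for `g ∈ A ∩ B`, `u = g t` moves `a` into `{c, d}` and `c` into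
`{a, b}`; it agrees with `g` off `{a, b, c, d}`, which `g` preserves, and `u²` again commutes
with `X` and `Y`, so `u⁴` fixes `a, b, c, d`. Hence `u ^ (4 |g|) = 1`, and `u` is a `π`-element
as `2 ∈ π`. The transposition `(a c)` lies in `S \ (A ∪ B)` but is not of the form `g t`, since
it fixes `b`.
-/

open Equiv

def IsPiElement {G : Type*} [Monoid G] (π : Set ℕ) (g : G) : Prop :=
  ∀ q : ℕ, q.Prime → q ∣ orderOf g → q ∈ π

def piElements (G : Type*) [Monoid G] (π : Set ℕ) : Set G :=
  {g | IsPiElement π g}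

def piCentralizer {G : Type*} [Monoid G] (π : Set ℕ) (x : G) : Set G :=
  {g | Commute x g ∧ IsPiElement π g}

section PiElement

variable {G H : Type*} [Monoid G] [Monoid H] {π : Set ℕ}

lemma isPiElement_one : IsPiElement π (1 : G) := fun _ hq hq1 =>
  absurd (Nat.dvd_one.mp (orderOf_one (G := G) ▸ hq1)) hq.ne_one

lemma IsPiElement.of_pow_eq_one {g u : G} (hg : IsPiElement π g) (h2 : 2 ∈ π) {k : ℕ}
    (hu : u ^ (2 ^ k * orderOf g) = 1) : IsPiElement π u := by
  intro q hq hqu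
  rcases hq.dvd_mul.mp (hqu.trans (orderOf_dvd_of_pow_eq_one hu)) with hq2 | hqg
  · rwa [(Nat.prime_dvd_prime_iff_eq hq Nat.prime_two).mp (hq.dvd_of_dvd_pow hq2)]
  · exact hg q hq hqg

lemma isPiElement_map_iff (e : G ≃* H) {g : G} : IsPiElement π (e g) ↔ IsPiElement π g := by
  rw [IsPiElement, IsPiElement, e.orderOf_eq]

lemma ncard_piCentralizer_map (e : G ≃* H) (x : G) :
    (piCentralizer π (e x)).ncard = (piCentralizer π x).ncard := by
  rw [← Set.ncard_image_of_injective (piCentralizer π x) e.injective]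
  congr 1
  ext g
  obtain ⟨g, rfl⟩ := e.surjective g
  rw [e.injective.mem_set_image]
  simp only [piCentralizer, Set.mem_ofPred_eq, commute_map_iff e.injective, isPiElement_map_iff]

end PiElement

lemma isPiElement_swap {α : Type*} [DecidableEq α] {π : Set ℕ} (h2 : 2 ∈ π) (a b : α) :
    IsPiElement π (swap a b) :=
  isPiElement_one.of_pow_eq_one h2 (k := 1) <| by
    rw [orderOf_one, mul_one, pow_one, sq, swap_mul_self]

lemma commute_mul_sq_of_semiconjBy {M : Type*} [Monoid M] {g t x y : M} (hx : Commute g x)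
    (hy : Commute g y) (htx : SemiconjBy t x y) (hty : SemiconjBy t y x) :
    Commute ((g * t) ^ 2) x :=
  sq (g * t) ▸ (SemiconjBy.mul_left hx hty).mul_left (SemiconjBy.mul_left hy htx)

lemma Set.EqOn.iterate {α : Type*} {f g : α → α} {s : Set α} (hf : Set.MapsTo f s s)
    (h : Set.EqOn g f s) (n : ℕ) : Set.EqOn g^[n] f^[n] s := by
  induction n with
  | zero => exact Set.eqOn_refl _ _
  | succ n ih =>
    intro p hp
    rw [Function.iterate_succ_apply, Function.iterate_succ_apply, h hp]
    exact ih (hf hp)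

lemma Fintype.exists_ne_of_four_le_card {α : Type*} [Fintype α] [DecidableEq α]
    (h : 4 ≤ Fintype.card α) (a b : α) :
    ∃ c d : α, c ≠ d ∧ c ≠ a ∧ c ≠ b ∧ d ≠ a ∧ d ≠ b := by
  have : 1 < ({a, b}ᶜ : Finset α).card := by
    rw [Finset.card_compl]
    have := Finset.card_le_two (a := a) (b := b)
    omega
  obtain ⟨c, hc, d, hd, hcd⟩ := Finset.one_lt_card.mp this
  simp only [Finset.mem_compl, Finset.mem_insert, Finset.mem_singleton, not_or] at hc hd
  exact ⟨c, d, hcd, hc.1, hc.2, hd.1, hd.2⟩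

lemma Set.ncard_add_ncard_lt_of_ncard_inter_lt {α : Type*} {A B S : Set α} (hS : S.Finite)
    (hA : A ⊆ S) (hB : B ⊆ S) (h : (A ∩ B).ncard < (S \ (A ∪ B)).ncard) :
    A.ncard + B.ncard < S.ncard := by
  have hunion := ncard_union_add_ncard_inter A B (hS.subset hA) (hS.subset hB)
  have hdiff := ncard_sdiff_add_ncard_of_subset (union_subset hA hB) hS
  omega

namespace Equiv.Perm

variable {α : Type*} [DecidableEq α] {a b c d : α} {σ : Perm α}

lemma apply_eq_or_apply_eq_of_commute_swap (hab : a ≠ b) (h : Commute (swap a b) σ) :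
    σ a = a ∨ σ a = b := by
  have key : swap a b (σ a) = σ b := by
    simpa only [mul_apply, swap_apply_left] using congrArg (· a) h.eq
  by_contra! hne
  rw [swap_apply_of_ne_of_ne hne.1 hne.2] at key
  exact hab (σ.injective key)

lemma mapsTo_pair_of_commute_swap (hab : a ≠ b) (h : Commute (swap a b) σ) :
    Set.MapsTo σ {a, b} {a, b} := by
  rintro p (rfl | rfl)
  · exact apply_eq_or_apply_eq_of_commute_swap hab h
  · exact (apply_eq_or_apply_eq_of_commute_swap hab.symm (swap_comm p a ▸ h)).symm

lemma mapsTo_compl_pair_of_commute_swap (hab : a ≠ b) (h : Commute (swap a b) σ) :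
    Set.MapsTo σ {a, b}ᶜ {a, b}ᶜ := fun p hp hσp =>
  hp (by simpa using mapsTo_pair_of_commute_swap hab h.inv_right hσp)

lemma sq_apply_left_of_commute_swap (hab : a ≠ b) (h : Commute (swap a b) σ) :
    (σ ^ 2) a = a := by
  rw [sq, mul_apply]
  rcases apply_eq_or_apply_eq_of_commute_swap hab h with ha | ha <;> rw [ha]
  · exact ha
  · simpa only [mul_apply, swap_apply_left, ha, swap_apply_right] using (congrArg (· a) h.eq).symm

lemma semiconjBy_swap_mul_swap (hab : a ≠ b) (had : a ≠ d) (hcd : c ≠ d) :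
    SemiconjBy (swap a c * swap b d) (swap a b) (swap c d) := by
  rw [SemiconjBy, ← mul_inv_eq_iff_eq_mul, ← swap_apply_apply, mul_apply, mul_apply,
    swap_apply_of_ne_of_ne hab had, swap_apply_left, swap_apply_left,
    swap_apply_of_ne_of_ne had.symm hcd.symm]

theorem isPiElement_mul_swap_mul_swap {π : Set ℕ} (hab : a ≠ b) (had : a ≠ d) (hbc : b ≠ c)
    (hcd : c ≠ d) (h2 : 2 ∈ π) {g : Perm α}
    (hg : IsPiElement π g) (hgX : Commute (swap a b) g) (hgY : Commute (swap c d) g) :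
    IsPiElement π (g * (swap a c * swap b d)) := by
  set t := swap a c * swap b d
  have htX := semiconjBy_swap_mul_swap hab had hcd
  have htY : SemiconjBy t (swap c d) (swap a b) := by
    simpa only [swap_comm] using semiconjBy_swap_mul_swap hcd hbc.symm hab
  set u := g * t
  set B : Set α := {a, b} ∪ {c, d}
  have hu2X := (commute_mul_sq_of_semiconjBy hgX.symm hgY.symm htX htY).symm
  have hu2Y := (commute_mul_sq_of_semiconjBy hgY.symm hgX.symm htY htX).symm
  have hfixB : ∀ p ∈ B, (u ^ 4) p = p := by
    rw [show 4 = 2 * 2 from rfl, pow_mul]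
    rintro p ((rfl | rfl) | (rfl | rfl))
    · exact sq_apply_left_of_commute_swap hab hu2X
    · exact sq_apply_left_of_commute_swap hab.symm (swap_comm p a ▸ hu2X)
    · exact sq_apply_left_of_commute_swap hcd hu2Y
    · exact sq_apply_left_of_commute_swap hcd.symm (swap_comm p c ▸ hu2Y)
  have hu : Set.EqOn u g Bᶜ := by
    intro p hp
    simp only [B, Set.mem_compl_iff, Set.mem_union, Set.mem_insert_iff, Set.mem_singleton_iff,
      not_or] at hp
    simp [u, t, swap_apply_of_ne_of_ne, hp]
  have hgB : Set.MapsTo g Bᶜ Bᶜ := by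
    rw [Set.compl_union]
    exact (mapsTo_compl_pair_of_commute_swap hab hgX).inter_inter
      (mapsTo_compl_pair_of_commute_swap hcd hgY)
  refine hg.of_pow_eq_one h2 (k := 2) (Perm.ext fun p => ?_)
  by_cases hp : p ∈ B
  · rw [pow_mul]
    exact pow_apply_eq_self_of_apply_eq_self (hfixB p hp) _
  · calc (u ^ (2 ^ 2 * orderOf g)) p = (g ^ (2 ^ 2 * orderOf g)) p :=
        hu.iterate hgB _ hp
      _ = p := by rw [mul_comm, pow_mul, pow_orderOf_eq_one, one_pow, one_apply]

theorem two_mul_ncard_piCentralizer_swap_lt [Finite α] {π : Set ℕ} (hab : a ≠ b) (hac : a ≠ c)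
    (had : a ≠ d) (hbc : b ≠ c) (hbd : b ≠ d) (hcd : c ≠ d) (h2 : 2 ∈ π) :
    2 * (piCentralizer π (swap a b)).ncard < (piElements (Perm α) π).ncard := by
  set t := swap a c * swap b d
  have hBA : (piCentralizer π (swap c d)).ncard = (piCentralizer π (swap a b)).ncard := by
    rw [← mul_inv_eq_of_eq_mul (semiconjBy_swap_mul_swap hab had hcd)]
    exact ncard_piCentralizer_map (MulAut.conj t) _
  set A := piCentralizer π (swap a b)
  set B := piCentralizer π (swap c d)
  have hdisj : _root_.Disjoint ({a, b} : Set α) {c, d} := by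
    simp [hac.symm, had.symm, hbc.symm, hbd.symm]
  have hnotMem : ∀ σ : Perm α, σ a ∈ ({c, d} : Set α) → σ c ∈ ({a, b} : Set α) → σ ∉ A ∪ B := by
    rintro σ hσa hσc (⟨hσ, -⟩ | ⟨hσ, -⟩)
    · exact Set.disjoint_left.mp hdisj (mapsTo_pair_of_commute_swap hab hσ (by simp)) hσa
    · exact Set.disjoint_left.mp hdisj hσc (mapsTo_pair_of_commute_swap hcd hσ (by simp))
  have hta : t a = c := by rw [mul_apply, swap_apply_of_ne_of_ne hab had, swap_apply_left]
  have htb : t b = d := by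
    rw [mul_apply, swap_apply_left, swap_apply_of_ne_of_ne had.symm hcd.symm]
  have htc : t c = a := by rw [mul_apply, swap_apply_of_ne_of_ne hbc.symm hcd, swap_apply_right]
  suffices A.ncard + B.ncard < (piElements (Perm α) π).ncard by omega
  refine Set.ncard_add_ncard_lt_of_ncard_inter_lt (Set.toFinite _) (fun g hg => hg.2)
    (fun g hg => hg.2) ?_
  rw [← Set.ncard_image_of_injective (A ∩ B) (mul_left_injective t)]
  refine Set.ncard_lt_ncard ((Set.ssubset_iff_of_subset ?_).mpr ⟨swap a c, ?_, ?_⟩)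
  · rintro _ ⟨g, ⟨⟨hgX, hg⟩, hgY, -⟩, rfl⟩
    refine ⟨isPiElement_mul_swap_mul_swap hab had hbc hcd h2 hg hgX hgY, hnotMem _ ?_ ?_⟩
    · rw [mul_apply, hta]
      exact mapsTo_pair_of_commute_swap hcd hgY (by simp)
    · rw [mul_apply, htc]
      exact mapsTo_pair_of_commute_swap hab hgX (by simp)
  · exact ⟨isPiElement_swap h2 a c, hnotMem _ (by simp) (by simp)⟩
  · rintro ⟨g, ⟨-, hgY, -⟩, hgt⟩
    have hgd : (g * t) b ∈ ({c, d} : Set α) := by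
      rw [mul_apply, htb]
      exact mapsTo_pair_of_commute_swap hcd hgY (by simp)
    rw [show g * t = swap a c from hgt, swap_apply_of_ne_of_ne hab.symm hbc] at hgd
    exact Set.disjoint_left.mp hdisj (by simp) hgd

end Equiv.Perm

theorem transposition_centralizer_pi_ratio_lt_half_general {n : ℕ} (hn : 5 ≤ n)
    (π : Set ℕ) (h2π : 2 ∈ π)
    (x : Equiv.Perm (Fin n)) (hx : x.IsSwap) :
    (Nat.card {g : Equiv.Perm (Fin n) | Commute x g ∧
        ∀ q : ℕ, q.Prime → q ∣ orderOf g → q ∈ π} : ℝ)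
      / (Nat.card {g : Equiv.Perm (Fin n) |
          ∀ q : ℕ, q.Prime → q ∣ orderOf g → q ∈ π} : ℝ)
      < 1 / 2 := by
  obtain ⟨a, b, hab, rfl⟩ := hx
  obtain ⟨c, d, hcd, hca, hcb, hda, hdb⟩ :=
    Fintype.exists_ne_of_four_le_card (by rw [Fintype.card_fin]; omega) a b
  have key := Perm.two_mul_ncard_piCentralizer_swap_lt hab hca.symm hda.symm hcb.symm hdb.symm
    hcd h2π
  change ((piCentralizer π (swap a b)).ncard : ℝ) / (piElements (Perm (Fin n)) π).ncard < 1 / 2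
  rw [div_lt_iff₀ (by exact_mod_cast (Nat.zero_le _).trans_lt key)]
  have : (2 * (piCentralizer π (swap a b)).ncard : ℝ) < (piElements (Perm (Fin n)) π).ncard := by
    exact_mod_cast key
  linarith

/-- Let `n ≥ 5` and let `π` be a set of primes containing `2`. If `x ∈ S_n` is
a transposition, then strictly fewer than half of the `π`-elements of `S_n`
commute with `x`. -/
theorem transposition_centralizer_pi_ratio_lt_half {n : ℕ} (hn : 5 ≤ n)
    (π : Set ℕ) (hπ : ∀ q ∈ π, Nat.Prime q) (h2π : 2 ∈ π)
    (x : Equiv.Perm (Fin n)) (hx : x.IsSwap) :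
    (Nat.card {g : Equiv.Perm (Fin n) | Commute x g ∧
        ∀ q : ℕ, q.Prime → q ∣ orderOf g → q ∈ π} : ℝ)
      / (Nat.card {g : Equiv.Perm (Fin n) |
          ∀ q : ℕ, q.Prime → q ∣ orderOf g → q ∈ π} : ℝ)
      < 1 / 2 :=
  transposition_centralizer_pi_ratio_lt_half_general hn π h2π x hx
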